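/- For finite monoids the following chain of implications holds: every finite idempotent commutative monoid (x·x = x and x·y = y·x for all x, y) is J-trivial; every finite J-trivial monoid satisfies (xyz)^ω·y·(xyz)^ω = (xyz)^ω for all x, y, z; and every finite monoid satisfying (xyz)^ω·y·(xyz)^ω = (xyz)^ω for all x, y, z satisfies x·x^ω = x^ω for all x (i.e., is aperiodic). -/
import Mathlib


/-- The ω-power of an element of a finite monoid: `m ^ (card M)!`, which is
the unique idempotent among the positive powers of `m`. -/
def omegaPow {M : Type} [Monoid M] [Fintype M] (m : M) : M :=
  m ^ (Fintype.card M).factorial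

/-- A monoid is `J`-trivial if equality of the two-sided ideals generated by
two elements implies equality of the elements. -/
def JTrivial (M : Type) [Monoid M] : Prop :=
  ∀ s t : M, {x : M | ∃ a b : M, a * s * b = x} = {x : M | ∃ a b : M, a * t * b = x} → s = t

/-- `omegaPow m` is idempotent. -/
lemma omegaPow_idem {M : Type} [Monoid M] [Fintype M] (m : M) :
    omegaPow m * omegaPow m = omegaPow m := by
  unfold omegaPow
  set n := Fintype.card M with hn
  have hninj : ¬ Function.Injective (fun i : Fin (n + 1) => m ^ (i : ℕ)) := by
    intro h
    have := Fintype.card_le_of_injective _ h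
    simp [hn] at this
  rw [Function.not_injective_iff] at hninj
  obtain ⟨i, j, hij, hne⟩ := hninj
  obtain ⟨i, j, hlt, hij⟩ : ∃ i j : Fin (n+1), (i:ℕ) < j ∧ m ^ (i:ℕ) = m ^ (j:ℕ) := by
    rcases lt_or_gt_of_ne hne with h | h
    · exact ⟨i, j, h, hij⟩
    · exact ⟨j, i, h, hij.symm⟩
  set p : ℕ := (j : ℕ) - i with hp
  have hppos : 0 < p := Nat.sub_pos_of_lt hlt
  have hstep : ∀ a : ℕ, (i:ℕ) ≤ a → m ^ (a + p) = m ^ a := by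
    intro a ha
    have : a + p = (a - i) + ((j:ℕ)) := by omega
    rw [this, pow_add, ← hij, ← pow_add]
    congr 1
    omega
  have hmain : ∀ k a : ℕ, (i:ℕ) ≤ a → m ^ (a + k * p) = m ^ a := by
    intro k
    induction k with
    | zero => simp
    | succ k ih =>
      intro a ha
      have : a + (k+1) * p = (a + p) + k * p := by ring
      rw [this, ih _ (le_trans ha (Nat.le_add_right _ _)), hstep a ha]
  have hple : p ≤ n := by have := j.isLt; omega
  have hdvd : p ∣ n.factorial := Nat.dvd_factorial hppos hple
  obtain ⟨c, hc⟩ := hdvd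
  have hile : (i:ℕ) ≤ n.factorial := by
    have h1 : (i:ℕ) ≤ n := by have := j.isLt; omega
    exact le_trans h1 (Nat.self_le_factorial n)
  calc m ^ n.factorial * m ^ n.factorial = m ^ (n.factorial + c * p) := by
        rw [← pow_add]; congr 1
        have hcp : c * p = n.factorial := by rw [hc, mul_comm]
        omega
    _ = m ^ n.factorial := hmain c _ hile

/-- Two-sided ideal equality from mutual divisibility. -/
lemma ideal_eq_of_dvd {M : Type} [Monoid M] {s t : M}
    (h1 : ∃ a b : M, a * t * b = s) (h2 : ∃ a b : M, a * s * b = t) :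
    {x : M | ∃ a b : M, a * s * b = x} = {x : M | ∃ a b : M, a * t * b = x} := by
  ext w
  simp only [Set.mem_setOf_eq]
  constructor
  · rintro ⟨a, b, rfl⟩
    obtain ⟨c, d, rfl⟩ := h1
    exact ⟨a * c, d * b, by simp [mul_assoc]⟩
  · rintro ⟨a, b, rfl⟩
    obtain ⟨c, d, rfl⟩ := h2
    exact ⟨a * c, d * b, by simp [mul_assoc]⟩

/-- The inclusions `J₁ ⊆ J ⊆ DA ⊆ Ap`: every finite idempotent commutative monoid
is `J`-trivial; every finite `J`-trivial monoid satisfies the `DA` identity; every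
finite monoid satisfying the `DA` identity is aperiodic. -/
theorem J1_subset_J_subset_DA_subset_Ap (M : Type) [Monoid M] [Fintype M] :
    ((∀ x : M, x * x = x) → (∀ x y : M, x * y = y * x) → JTrivial M) ∧
    (JTrivial M →
      ∀ x y z : M,
        omegaPow (x * y * z) * y * omegaPow (x * y * z) = omegaPow (x * y * z)) ∧
    ((∀ x y z : M,
        omegaPow (x * y * z) * y * omegaPow (x * y * z) = omegaPow (x * y * z)) →
      ∀ x : M, x * omegaPow x = omegaPow x) := by
  refine ⟨?_, ?_, ?_⟩
  · -- J₁ ⊆ J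
    intro hid hcomm s t hset
    have hs : s ∈ {x : M | ∃ a b : M, a * t * b = x} := by
      rw [← hset]; exact ⟨1, 1, by simp⟩
    have ht : t ∈ {x : M | ∃ a b : M, a * s * b = x} := by
      rw [hset]; exact ⟨1, 1, by simp⟩
    obtain ⟨a, b, hab⟩ := hs
    obtain ⟨c, d, hcd⟩ := ht
    have h1 : s * t = s := by
      calc s * t = a * t * (b * t) := by rw [← hab, mul_assoc]
        _ = a * t * (t * b) := by rw [hcomm b t]
        _ = a * (t * t) * b := by rw [← mul_assoc, mul_assoc a t t]
        _ = a * t * b := by rw [hid t]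
        _ = s := hab
    have h2 : t * s = t := by
      calc t * s = c * s * (d * s) := by rw [← hcd, mul_assoc]
        _ = c * s * (s * d) := by rw [hcomm d s]
        _ = c * (s * s) * d := by rw [← mul_assoc, mul_assoc c s s]
        _ = c * s * d := by rw [hid s]
        _ = t := hcd
    calc s = s * t := h1.symm
      _ = t * s := hcomm s t
      _ = t := h2
  · -- J ⊆ DA
    intro hJ x y z
    set e := omegaPow (x * y * z) with he
    have hee : e * e = e := omegaPow_idem _
    set N := (Fintype.card M).factorial with hN
    obtain ⟨K, hK⟩ : ∃ K, N = K + 1 :=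
      ⟨N - 1, by have := (Fintype.card M).factorial_pos; omega⟩
    have hmid : e = (x * y * z) * (x * y * z) ^ K := by
      rw [he]; unfold omegaPow
      rw [← hN, hK, pow_succ']
    have hexp : e * x * y * z * (x * y * z) ^ K * e = e := by
      calc e * x * y * z * (x * y * z) ^ K * e
          = e * ((x * y * z) * (x * y * z) ^ K) * e := by
            simp only [mul_assoc]
        _ = e * e * e := by rw [← hmid]
        _ = e := by rw [hee, hee]
    have hx : e * x = e := by
      apply hJ
      apply ideal_eq_of_dvd
      · exact ⟨1, x, by simp⟩
      · refine ⟨1, y * z * (x * y * z) ^ K * e, ?_⟩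
        simpa only [one_mul, mul_assoc] using hexp
    have hy : e * y = e := by
      apply hJ
      apply ideal_eq_of_dvd
      · exact ⟨1, y, by simp⟩
      · refine ⟨1, z * (x * y * z) ^ K * e, ?_⟩
        have h2 : e * x * y * (z * (x * y * z) ^ K * e) = e := by
          simpa only [mul_assoc] using hexp
        calc 1 * (e * y) * (z * (x * y * z) ^ K * e)
            = e * x * y * (z * (x * y * z) ^ K * e) := by rw [one_mul, hx]
          _ = e := h2
    rw [hy, hee]
  · -- DA ⊆ Ap
    intro h x
    have hxx : omegaPow (x * x) = omegaPow x := by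
      unfold omegaPow
      have : x * x = x ^ 2 := (sq x).symm
      rw [this, ← pow_mul, two_mul, pow_add]
      exact omegaPow_idem x
    have hkey := h 1 x x
    rw [one_mul, hxx] at hkey
    have hee : omegaPow x * omegaPow x = omegaPow x := omegaPow_idem x
    calc x * omegaPow x = x * (omegaPow x * omegaPow x) := by rw [hee]
      _ = (x * omegaPow x) * omegaPow x := by rw [mul_assoc]
      _ = (omegaPow x * x) * omegaPow x := by
          unfold omegaPow
          rw [← pow_succ', pow_succ]
      _ = omegaPow x := hkey
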